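/- Let A₀ be a unital C*-algebra, let m ≥ 1, and let f : ℝ → ℝ be continuous on [−1,1]. Suppose there exist constants c₀ > 0 and 0 < ξ < 1 such that for every integer k ≥ 0 there is a real polynomial p_k of degree at most k with sup_{x∈[−1,1]} |f(x) − p_k(x)| ≤ c₀ ξ^{k+1}, and set M = sup_{x∈[−1,1]} |f(x)|. Then for every n ∈ ℕ and every selfadjoint matrix A ∈ M_n(A₀) with bandwidth at most m and spectrum contained in [−1,1], one has ‖[f(A)]_{ij}‖ ≤ max{M, c₀} · ξ^{|i−j|/m} for all indices i, j; that is, the exponential decay bound holds with constants independent of the dimension n. -/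

import Mathlib

/-!
If `A` has bandwidth `m`, then `p(A)` has bandwidth `k m` for every polynomial `p` of degree
at most `k`, so an entry `(i, j)` of `f(A)` with `k m < |i - j|` is also the `(i, j)` entry of
`f(A) - p(A)`. Entries are bounded by the C⋆-norm, and the functional calculus gives
`‖f(A) - p(A)‖ ≤ sup_{[-1,1]} |f - p| ≤ c₀ ξ^(k+1)`; the largest admissible `k` satisfies
`|i - j| / m ≤ k + 1`. On the diagonal one uses `‖f(A)‖ ≤ M` instead.
-/

open Polynomial

namespace Matrix

variable {n : ℕ} {α : Type*}

def IsBanded [Zero α] (m : ℕ) (A : Matrix (Fin n) (Fin n) α) : Prop :=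
  ∀ i j : Fin n, (m : ℤ) < |(i : ℤ) - (j : ℤ)| → A i j = 0

namespace IsBanded

variable {m m' : ℕ} {A B : Matrix (Fin n) (Fin n) α}

theorem mono [Zero α] (hA : IsBanded m A) (hmm' : m ≤ m') : IsBanded m' A :=
  fun i j hij => hA i j (lt_of_le_of_lt (by exact_mod_cast hmm') hij)

theorem one [Zero α] [One α] : IsBanded 0 (1 : Matrix (Fin n) (Fin n) α) := by
  intro i j hij
  refine one_apply_ne fun h => ?_
  simp [h] at hij

theorem mul [NonUnitalNonAssocSemiring α] (hA : IsBanded m A) (hB : IsBanded m' B) :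
    IsBanded (m + m') (A * B) := by
  intro i j hij
  rw [mul_apply]
  refine Finset.sum_eq_zero fun t _ => ?_
  by_cases hit : (m : ℤ) < |(i : ℤ) - (t : ℤ)|
  · rw [hA i t hit, zero_mul]
  · have htj : (m' : ℤ) < |(t : ℤ) - (j : ℤ)| := by
      have := abs_sub_le (i : ℤ) t j
      push_cast at hij
      omega
    rw [hB t j htj, mul_zero]

theorem pow [Semiring α] (hA : IsBanded m A) (l : ℕ) : IsBanded (l * m) (A ^ l) := by
  induction l with
  | zero => simpa using one
  | succ l ih => simpa [pow_succ, add_one_mul] using ih.mul hA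

theorem aeval {R : Type*} [CommSemiring R] [Semiring α] [Algebra R α] (hA : IsBanded m A)
    {p : R[X]} {k : ℕ} (hp : p.natDegree ≤ k) : IsBanded (k * m) (aeval A p) := by
  intro i j hij
  rw [aeval_eq_sum_range' (Nat.lt_succ_of_le hp), sum_apply]
  refine Finset.sum_eq_zero fun l hl => ?_
  have hlk : l * m ≤ k * m := Nat.mul_le_mul_right m (Finset.mem_range_succ_iff.mp hl)
  rw [smul_apply, (hA.pow l).mono hlk i j hij, smul_zero]

end IsBanded

end Matrix

namespace StarAlgEquiv

theorem norm_symm_apply_le {ι A₀ 𝒜 : Type*} [Fintype ι] [DecidableEq ι] [CStarAlgebra A₀]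
    [CStarAlgebra 𝒜] (φ : Matrix ι ι A₀ ≃⋆ₐ[ℂ] 𝒜) (a : 𝒜) (i j : ι) :
    ‖φ.symm a i j‖ ≤ ‖a‖ := by
  -- `CStarMatrix` is normed relative to a star-ordering of the entries; any one will do.
  let _ := CStarAlgebra.spectralOrder A₀
  let _ := CStarAlgebra.spectralOrderedRing A₀
  let ψ : 𝒜 ≃⋆ₐ[ℂ] CStarMatrix ι ι A₀ := φ.symm.trans CStarMatrix.ofMatrixStarAlgEquiv
  calc ‖φ.symm a i j‖ ≤ ‖ψ a‖ := CStarMatrix.norm_entry_le_norm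
    _ = ‖a‖ := NonUnitalStarAlgHom.norm_map ψ ψ.injective a

theorem spectrum_real_eq {A B : Type*} [Ring A] [Ring B] [Algebra ℂ A] [Algebra ℂ B]
    [Star A] [Star B] (φ : A ≃⋆ₐ[ℂ] B) (a : A) : spectrum ℝ (φ a) = spectrum ℝ a :=
  AlgEquiv.spectrum_eq (φ.toAlgEquiv.restrictScalars ℝ) a

end StarAlgEquiv

section FunctionalCalculus

variable {𝒜 : Type*} [CStarAlgebra 𝒜] {a : 𝒜} {f : ℝ → ℝ}

theorem norm_cfc_le_sSup_abs_image {S : Set ℝ} (hS : IsCompact S) (haS : spectrum ℝ a ⊆ S)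
    (hf : ContinuousOn f S) : ‖cfc f a‖ ≤ sSup ((fun x => |f x|) '' S) :=
  norm_cfc_le (Real.sSup_nonneg (by rintro _ ⟨x, -, rfl⟩; exact abs_nonneg _)) fun x hx =>
    le_csSup (hS.bddAbove_image hf.abs) ⟨x, haS hx, rfl⟩

theorem norm_cfc_sub_aeval_le (ha : IsSelfAdjoint a) (hf : ContinuousOn f (spectrum ℝ a))
    {p : ℝ[X]} {ε : ℝ} (hε : 0 ≤ ε) (hfp : ∀ x ∈ spectrum ℝ a, |f x - p.eval x| ≤ ε) :
    ‖cfc f a - aeval a p‖ ≤ ε := by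
  rw [← cfc_polynomial p a, ← cfc_sub f p.eval a hf p.continuous.continuousOn]
  exact norm_cfc_le hε hfp

end FunctionalCalculus

theorem exists_nat_mul_lt_and_div_le_add_one {x y : ℝ} (hx : 0 < x) (hy : 0 ≤ y) :
    ∃ k : ℕ, k * y < x ∧ x / y ≤ k + 1 := by
  rcases hy.eq_or_lt with rfl | hy
  · exact ⟨0, by simpa using hx, by simp⟩
  have hxy : 0 < x / y := div_pos hx hy
  refine ⟨⌈x / y⌉₊ - 1, ?_, ?_⟩
  · rw [← lt_div_iff₀ hy, Nat.cast_pred (Nat.ceil_pos.mpr hxy)]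
    linarith [Nat.ceil_lt_add_one hxy.le]
  · rw [Nat.cast_pred (Nat.ceil_pos.mpr hxy), sub_add_cancel]
    exact Nat.le_ceil _

theorem norm_apply_symm_cfc_le_of_isBanded {A₀ 𝒜 : Type*} [CStarAlgebra A₀] [CStarAlgebra 𝒜]
    {n m : ℕ} (φ : Matrix (Fin n) (Fin n) A₀ ≃⋆ₐ[ℂ] 𝒜) {A : Matrix (Fin n) (Fin n) A₀}
    (hband : A.IsBanded m) (hA : IsSelfAdjoint A) {S : Set ℝ} (hAS : spectrum ℝ A ⊆ S)
    {f : ℝ → ℝ} (hf : ContinuousOn f S) {p : ℝ[X]} {k : ℕ} (hp : p.natDegree ≤ k) {ε : ℝ}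
    (hε : 0 ≤ ε) (hfp : ∀ x ∈ S, |f x - p.eval x| ≤ ε) {i j : Fin n}
    (hij : ((k * m : ℕ) : ℤ) < |(i : ℤ) - (j : ℤ)|) :
    ‖φ.symm (cfc f (φ A)) i j‖ ≤ ε := by
  have hφS : spectrum ℝ (φ A) ⊆ S := (φ.spectrum_real_eq A).trans_subset hAS
  have hpA : φ.symm (aeval (φ A) p) = aeval A p := by
    rw [← φ.symm_apply_apply (aeval A p)]
    congr 1
    exact aeval_algHom_apply (φ.toAlgEquiv.restrictScalars ℝ).toAlgHom A p
  calc ‖φ.symm (cfc f (φ A)) i j‖ = ‖φ.symm (cfc f (φ A) - aeval (φ A) p) i j‖ := by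
        rw [map_sub, Matrix.sub_apply, hpA, hband.aeval hp i j hij, sub_zero]
    _ ≤ ‖cfc f (φ A) - aeval (φ A) p‖ := φ.norm_symm_apply_le _ i j
    _ ≤ ε := norm_cfc_sub_aeval_le (hA.map φ) (hf.mono hφS) hε fun x hx => hfp x (hφS hx)

theorem norm_entry_cfc_le_exp_decay_uniform_in_dimension_general
    {A₀ : Type*} [CStarAlgebra A₀] (m : ℕ)
    (f : ℝ → ℝ) (hf : ContinuousOn f (Set.Icc (-1) 1))
    (c₀ ξ : ℝ) (hc₀ : 0 < c₀) (hξ₀ : 0 < ξ) (hξ₁ : ξ < 1)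
    (happrox : ∀ k : ℕ, ∃ p : Polynomial ℝ, p.degree ≤ k ∧
      ∀ x ∈ Set.Icc (-1 : ℝ) 1, |f x - p.eval x| ≤ c₀ * ξ ^ (k + 1))
    (M : ℝ) (hM : M = sSup ((fun x => |f x|) '' Set.Icc (-1 : ℝ) 1)) :
    ∀ (n : ℕ) (𝒜 : Type*) [CStarAlgebra 𝒜]
      (φ : Matrix (Fin n) (Fin n) A₀ ≃⋆ₐ[ℂ] 𝒜)
      (A : Matrix (Fin n) (Fin n) A₀), IsSelfAdjoint A →
      spectrum ℝ A ⊆ Set.Icc (-1) 1 →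
      (∀ i j : Fin n, (m : ℤ) < |(i : ℤ) - (j : ℤ)| → A i j = 0) →
      ∀ i j : Fin n,
        ‖(φ.symm (cfc f (φ A))) i j‖ ≤
          max M c₀ * ξ ^ (|((i : ℕ) : ℝ) - ((j : ℕ) : ℝ)| / (m : ℝ)) := by
  intro n 𝒜 _ φ A hA hAspec hband i j
  have hdist : |((i : ℕ) : ℝ) - ((j : ℕ) : ℝ)| = ((|(i : ℤ) - (j : ℤ)| : ℤ) : ℝ) := by
    push_cast; rfl
  rw [hdist]
  generalize hd : |(i : ℤ) - (j : ℤ)| = d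
  rcases (hd ▸ abs_nonneg _ : 0 ≤ d).eq_or_lt with rfl | hd0
  · rw [Int.cast_zero, zero_div, Real.rpow_zero, mul_one]
    calc ‖φ.symm (cfc f (φ A)) i j‖ ≤ ‖cfc f (φ A)‖ := φ.norm_symm_apply_le _ i j
      _ ≤ M := hM ▸ norm_cfc_le_sSup_abs_image isCompact_Icc
          ((φ.spectrum_real_eq A).trans_subset hAspec) hf
      _ ≤ max M c₀ := le_max_left _ _
  · obtain ⟨k, hkm, hk⟩ :=
      exists_nat_mul_lt_and_div_le_add_one (Int.cast_pos.mpr hd0) (Nat.cast_nonneg' m)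
    obtain ⟨p, hp, hfp⟩ := happrox k
    calc ‖φ.symm (cfc f (φ A)) i j‖ ≤ c₀ * ξ ^ (k + 1) :=
          norm_apply_symm_cfc_le_of_isBanded φ hband hA hAspec hf
            (natDegree_le_iff_degree_le.mpr hp) (by positivity) hfp (hd ▸ by exact_mod_cast hkm)
      _ ≤ c₀ * ξ ^ ((d : ℝ) / m) := by
          gcongr
          rw [← Real.rpow_natCast]
          exact Real.rpow_le_rpow_of_exponent_ge hξ₀ hξ₁.le (by exact_mod_cast hk)
      _ ≤ max M c₀ * ξ ^ ((d : ℝ) / m) := by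
          gcongr
          exact le_max_right _ _

/-- Fix a unital C*-algebra `A₀`, a bandwidth `m ≥ 1`, and `f : ℝ → ℝ`
continuous on `[-1,1]` admitting polynomial approximations of degree `k` with uniform error
at most `c₀ ξ^{k+1}` on `[-1,1]` (`c₀ > 0`, `0 < ξ < 1`); set `M = sup_{[-1,1]} |f|`.
Then for *every* dimension `n` and every selfadjoint `A ∈ Mₙ(A₀)` with bandwidth at most `m`
and spectrum in `[-1,1]` (the C*-structure of `Mₙ(A₀)` realized by a *-isomorphism `φ` onto
a C*-algebra `𝒜`, and `f(A) = φ.symm (cfc f (φ A))`),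
`‖[f(A)]_{ij}‖ ≤ max{M, c₀} · ξ^{|i-j|/m}`: the decay bound is independent of `n`. -/
theorem norm_entry_cfc_le_exp_decay_uniform_in_dimension
    {A₀ : Type*} [CStarAlgebra A₀] (m : ℕ) (hm : 1 ≤ m)
    (f : ℝ → ℝ) (hf : ContinuousOn f (Set.Icc (-1) 1))
    (c₀ ξ : ℝ) (hc₀ : 0 < c₀) (hξ₀ : 0 < ξ) (hξ₁ : ξ < 1)
    (happrox : ∀ k : ℕ, ∃ p : Polynomial ℝ, p.degree ≤ k ∧
      ∀ x ∈ Set.Icc (-1 : ℝ) 1, |f x - p.eval x| ≤ c₀ * ξ ^ (k + 1))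
    (M : ℝ) (hM : M = sSup ((fun x => |f x|) '' Set.Icc (-1 : ℝ) 1)) :
    ∀ (n : ℕ) (𝒜 : Type*) [CStarAlgebra 𝒜]
      (φ : Matrix (Fin n) (Fin n) A₀ ≃⋆ₐ[ℂ] 𝒜)
      (A : Matrix (Fin n) (Fin n) A₀), IsSelfAdjoint A →
      spectrum ℝ A ⊆ Set.Icc (-1) 1 →
      (∀ i j : Fin n, (m : ℤ) < |(i : ℤ) - (j : ℤ)| → A i j = 0) →
      ∀ i j : Fin n,
        ‖(φ.symm (cfc f (φ A))) i j‖ ≤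
          max M c₀ * ξ ^ (|((i : ℕ) : ℝ) - ((j : ℕ) : ℝ)| / (m : ℝ)) :=
  norm_entry_cfc_le_exp_decay_uniform_in_dimension_general m f hf c₀ ξ hc₀ hξ₀ hξ₁ happrox M hM
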